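/- arXiv:1906.02335 — 5 statements merged into one kernel-verified Lean document; each statement's English description precedes it below -/
import Mathlib

section
/- Let g₁(r,z) = (g₁¹, g₁²) with g₁¹(r,z) = r·(3h₀²k₀ν₀²z²/(2ω⁵) - (α₁ω² + k₀μ₁ν₀²)/(2ω³)) + 3k₀ν₀⁴r³/(8ω⁵) and g₁²(r,z) = -h₀²ν₀z³(k₀ν₀+ω²)/ω⁵ - 3ν₀³r²z(k₀ν₀+ω²)/(2ω⁵) + μ₁ν₀z(k₀ν₀+ω²)/ω³. Assume ω>0, h₀≠0, ν₀≠0, k₀≠0, and that δ_b = k₀(2α₁ω² + k₀μ₁ν₀²) > 0, δ_c = k₀(α₁ω² + k₀μ₁ν₀²) > 0, δ_a = k₀(2k₀μ₁ν₀² - α₁ω²) > 0. Then (r₀, 0), (r₁, z₁), and (r₁, z₂) are zeros of g₁, where r₀ = (2ω/ν₀²)√((α₁ω² + k₀μ₁ν₀²)/(3k₀)), r₁ = (2ω/ν₀²)√((2k₀μ₁ν₀² - α₁ω²)/(15k₀)), z₁ = (ω/(h₀ν₀))√((2α₁ω² + k₀μ₁ν₀²)/(5k₀)), z₂ = -z₁.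 -/
set_option maxHeartbeats 1000000 in
/-- The three zeros of the first-order averaged function of the
Van der Pol-Duffing system. -/
theorem stmt3 (ω h₀ ν₀ k₀ α₁ μ₁ : ℝ) (hω : 0 < ω) (hh₀ : h₀ ≠ 0) (hν₀ : ν₀ ≠ 0)
    (hk₀ : k₀ ≠ 0)
    (g₁ g₂ : ℝ → ℝ → ℝ)
    (hg₁ : ∀ r z, g₁ r z =
      r * (3 * h₀ ^ 2 * k₀ * ν₀ ^ 2 * z ^ 2 / (2 * ω ^ 5)
        - (α₁ * ω ^ 2 + k₀ * μ₁ * ν₀ ^ 2) / (2 * ω ^ 3))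
      + 3 * k₀ * ν₀ ^ 4 * r ^ 3 / (8 * ω ^ 5))
    (hg₂ : ∀ r z, g₂ r z =
      -(h₀ ^ 2 * ν₀ * z ^ 3 * (k₀ * ν₀ + ω ^ 2) / ω ^ 5)
      - 3 * ν₀ ^ 3 * r ^ 2 * z * (k₀ * ν₀ + ω ^ 2) / (2 * ω ^ 5)
      + μ₁ * ν₀ * z * (k₀ * ν₀ + ω ^ 2) / ω ^ 3)
    (hδb : 0 < k₀ * (2 * α₁ * ω ^ 2 + k₀ * μ₁ * ν₀ ^ 2))
    (hδc : 0 < k₀ * (α₁ * ω ^ 2 + k₀ * μ₁ * ν₀ ^ 2))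
    (hδa : 0 < k₀ * (2 * k₀ * μ₁ * ν₀ ^ 2 - α₁ * ω ^ 2)) :
    let r₀ := (2 * ω / ν₀ ^ 2) *
      Real.sqrt ((α₁ * ω ^ 2 + k₀ * μ₁ * ν₀ ^ 2) / (3 * k₀))
    let r₁ := (2 * ω / ν₀ ^ 2) *
      Real.sqrt ((2 * k₀ * μ₁ * ν₀ ^ 2 - α₁ * ω ^ 2) / (15 * k₀))
    let z₁ := (ω / (h₀ * ν₀)) *
      Real.sqrt ((2 * α₁ * ω ^ 2 + k₀ * μ₁ * ν₀ ^ 2) / (5 * k₀))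
    let z₂ := -z₁
    (g₁ r₀ 0 = 0 ∧ g₂ r₀ 0 = 0) ∧
    (g₁ r₁ z₁ = 0 ∧ g₂ r₁ z₁ = 0) ∧
    (g₁ r₁ z₂ = 0 ∧ g₂ r₁ z₂ = 0) := by
  intro r₀ r₁ z₁ z₂
  have hAeq : (α₁ * ω ^ 2 + k₀ * μ₁ * ν₀ ^ 2) / (3 * k₀)
      = k₀ * (α₁ * ω ^ 2 + k₀ * μ₁ * ν₀ ^ 2) / (3 * k₀ ^ 2) := by
    field_simp
  have hBeq : (2 * k₀ * μ₁ * ν₀ ^ 2 - α₁ * ω ^ 2) / (15 * k₀)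
      = k₀ * (2 * k₀ * μ₁ * ν₀ ^ 2 - α₁ * ω ^ 2) / (15 * k₀ ^ 2) := by
    field_simp
  have hCeq : (2 * α₁ * ω ^ 2 + k₀ * μ₁ * ν₀ ^ 2) / (5 * k₀)
      = k₀ * (2 * α₁ * ω ^ 2 + k₀ * μ₁ * ν₀ ^ 2) / (5 * k₀ ^ 2) := by
    field_simp
  have hA0 : 0 ≤ (α₁ * ω ^ 2 + k₀ * μ₁ * ν₀ ^ 2) / (3 * k₀) := by
    rw [hAeq]; exact div_nonneg hδc.le (by positivity)
  have hB0 : 0 ≤ (2 * k₀ * μ₁ * ν₀ ^ 2 - α₁ * ω ^ 2) / (15 * k₀) := by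
    rw [hBeq]; exact div_nonneg hδa.le (by positivity)
  have hC0 : 0 ≤ (2 * α₁ * ω ^ 2 + k₀ * μ₁ * ν₀ ^ 2) / (5 * k₀) := by
    rw [hCeq]; exact div_nonneg hδb.le (by positivity)
  have sA : Real.sqrt ((α₁ * ω ^ 2 + k₀ * μ₁ * ν₀ ^ 2) / (3 * k₀)) ^ 2
      = (α₁ * ω ^ 2 + k₀ * μ₁ * ν₀ ^ 2) / (3 * k₀) := Real.sq_sqrt hA0
  have sB : Real.sqrt ((2 * k₀ * μ₁ * ν₀ ^ 2 - α₁ * ω ^ 2) / (15 * k₀)) ^ 2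
      = (2 * k₀ * μ₁ * ν₀ ^ 2 - α₁ * ω ^ 2) / (15 * k₀) := Real.sq_sqrt hB0
  have sC : Real.sqrt ((2 * α₁ * ω ^ 2 + k₀ * μ₁ * ν₀ ^ 2) / (5 * k₀)) ^ 2
      = (2 * α₁ * ω ^ 2 + k₀ * μ₁ * ν₀ ^ 2) / (5 * k₀) := Real.sq_sqrt hC0
  have hω' : ω ≠ 0 := hω.ne'
  have hr₀ : r₀ ^ 2 = 4 * ω ^ 2 * (α₁ * ω ^ 2 + k₀ * μ₁ * ν₀ ^ 2) / (3 * k₀ * ν₀ ^ 4) := by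
    show ((2 * ω / ν₀ ^ 2) * _) ^ 2 = _
    rw [mul_pow, sA]; field_simp; ring
  have hr₁ : r₁ ^ 2 = 4 * ω ^ 2 * (2 * k₀ * μ₁ * ν₀ ^ 2 - α₁ * ω ^ 2) / (15 * k₀ * ν₀ ^ 4) := by
    show ((2 * ω / ν₀ ^ 2) * _) ^ 2 = _
    rw [mul_pow, sB]; field_simp; ring
  have hz₁ : z₁ ^ 2 = ω ^ 2 * (2 * α₁ * ω ^ 2 + k₀ * μ₁ * ν₀ ^ 2) / (5 * k₀ * h₀ ^ 2 * ν₀ ^ 2) := by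
    show ((ω / (h₀ * ν₀)) * _) ^ 2 = _
    rw [mul_pow, sC, div_pow, div_mul_div_comm,
      div_eq_div_iff (mul_ne_zero (pow_ne_zero _ (mul_ne_zero hh₀ hν₀))
        (mul_ne_zero (by norm_num) hk₀))
      (by exact mul_ne_zero (mul_ne_zero (mul_ne_zero (by norm_num) hk₀)
        (pow_ne_zero _ hh₀)) (pow_ne_zero _ hν₀))]
    ring
  have hz₂ : z₂ ^ 2 = ω ^ 2 * (2 * α₁ * ω ^ 2 + k₀ * μ₁ * ν₀ ^ 2) / (5 * k₀ * h₀ ^ 2 * ν₀ ^ 2) := by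
    show (-z₁) ^ 2 = _
    rw [neg_pow, hz₁]; ring
  clear_value r₀ r₁ z₁ z₂
  have key₁ : ∀ r z : ℝ,
      3 * h₀ ^ 2 * k₀ * ν₀ ^ 2 * z ^ 2 / (2 * ω ^ 5)
        - (α₁ * ω ^ 2 + k₀ * μ₁ * ν₀ ^ 2) / (2 * ω ^ 3)
        + 3 * k₀ * ν₀ ^ 4 * r ^ 2 / (8 * ω ^ 5) = 0 →
      g₁ r z = 0 := by
    intro r z h
    rw [hg₁]
    have : g₁ r z = r * (3 * h₀ ^ 2 * k₀ * ν₀ ^ 2 * z ^ 2 / (2 * ω ^ 5)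
        - (α₁ * ω ^ 2 + k₀ * μ₁ * ν₀ ^ 2) / (2 * ω ^ 3)
        + 3 * k₀ * ν₀ ^ 4 * r ^ 2 / (8 * ω ^ 5)) := by rw [hg₁]; ring
    calc r * (3 * h₀ ^ 2 * k₀ * ν₀ ^ 2 * z ^ 2 / (2 * ω ^ 5)
        - (α₁ * ω ^ 2 + k₀ * μ₁ * ν₀ ^ 2) / (2 * ω ^ 3)) + 3 * k₀ * ν₀ ^ 4 * r ^ 3 / (8 * ω ^ 5)
        = r * (3 * h₀ ^ 2 * k₀ * ν₀ ^ 2 * z ^ 2 / (2 * ω ^ 5)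
        - (α₁ * ω ^ 2 + k₀ * μ₁ * ν₀ ^ 2) / (2 * ω ^ 3)
        + 3 * k₀ * ν₀ ^ 4 * r ^ 2 / (8 * ω ^ 5)) := by ring
      _ = r * 0 := by rw [h]
      _ = 0 := by ring
  have key₂ : ∀ r z : ℝ,
      -(h₀ ^ 2 * z ^ 2 / ω ^ 5) - 3 * ν₀ ^ 2 * r ^ 2 / (2 * ω ^ 5) + μ₁ / ω ^ 3 = 0 →
      g₂ r z = 0 := by
    intro r z h
    rw [hg₂]
    calc -(h₀ ^ 2 * ν₀ * z ^ 3 * (k₀ * ν₀ + ω ^ 2) / ω ^ 5)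
        - 3 * ν₀ ^ 3 * r ^ 2 * z * (k₀ * ν₀ + ω ^ 2) / (2 * ω ^ 5)
        + μ₁ * ν₀ * z * (k₀ * ν₀ + ω ^ 2) / ω ^ 3
        = ν₀ * z * (k₀ * ν₀ + ω ^ 2) *
          (-(h₀ ^ 2 * z ^ 2 / ω ^ 5) - 3 * ν₀ ^ 2 * r ^ 2 / (2 * ω ^ 5) + μ₁ / ω ^ 3) := by ring
      _ = ν₀ * z * (k₀ * ν₀ + ω ^ 2) * 0 := by rw [h]
      _ = 0 := by ring
  refine ⟨⟨?_, ?_⟩, ⟨?_, ?_⟩, ?_, ?_⟩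
  · refine key₁ _ _ ?_
    rw [hr₀]; field_simp; ring
  · rw [hg₂]; ring
  · refine key₁ _ _ ?_
    rw [hr₁, hz₁]; field_simp; ring
  · refine key₂ _ _ ?_
    rw [hr₁, hz₁]; field_simp; ring
  · refine key₁ _ _ ?_
    rw [hr₁, hz₂]; field_simp; ring
  · refine key₂ _ _ ?_
    rw [hr₁, hz₂]; field_simp; ring
end

section
/- With g₁ as given and parameters ω > 0, h₀ ≠ 0, ν₀ ≠ 0, k₀ ≠ 0, α₁ ≠ 0, assume δ_a = k₀(2k₀μ₁ν₀² - α₁ω²) > 0 and δ_b = k₀(2α₁ω² + k₀μ₁ν₀²) > 0. Then at the points (r₁, ±z₁) with r₁ = (2ω/ν₀²)√(δ_a/(15k₀²)) and z₁ = (ω/(h₀ν₀))√(δ_b/(5k₀²)), the determinant of the Jacobian of g₁ equals 2δ_aδ_bδ_d/(5k₀³ν₀α₁ω⁶), where δ_d = α₁(k₀ν₀+ω²). -/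
lemma deriv_cubic' (A B : ℝ) (x : ℝ) :
    deriv (fun t : ℝ => A * t ^ 3 + B * t) x = 3 * A * x ^ 2 + B := by
  have h : HasDerivAt (fun t : ℝ => A * t ^ 3 + B * t)
      (A * (3 * x ^ 2) + B * 1) x := by
    have h1 : HasDerivAt (fun t : ℝ => t ^ 3) ((3 : ℕ) * x ^ 2) x := by
      simpa using hasDerivAt_pow 3 x
    exact (h1.const_mul A).add ((hasDerivAt_id x).const_mul B)
  rw [h.deriv]; ring

lemma deriv_quad' (A B : ℝ) (x : ℝ) :
    deriv (fun t : ℝ => A * t ^ 2 + B) x = 2 * A * x := by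
  have h : HasDerivAt (fun t : ℝ => A * t ^ 2 + B)
      (A * (2 * x ^ 1) + 0) x := by
    have h1 : HasDerivAt (fun t : ℝ => t ^ 2) ((2 : ℕ) * x ^ 1) x := by
      simpa using hasDerivAt_pow 2 x
    exact (h1.const_mul A).add (hasDerivAt_const x B)
  rw [h.deriv]; ring

/-- The Jacobian determinant of the first-order averaged function at the
symmetric zeros (r₁, ±z₁) equals 2δ_aδ_bδ_d/(5k₀³ν₀α₁ω⁶). -/
theorem stmt5 (ω h₀ ν₀ k₀ α₁ μ₁ : ℝ) (hω : 0 < ω) (hh₀ : h₀ ≠ 0) (hν₀ : ν₀ ≠ 0)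
    (hk₀ : k₀ ≠ 0) (hα₁ : α₁ ≠ 0)
    (g₁ g₂ : ℝ → ℝ → ℝ)
    (hg₁ : ∀ r z, g₁ r z =
      r * (3 * h₀ ^ 2 * k₀ * ν₀ ^ 2 * z ^ 2 / (2 * ω ^ 5)
        - (α₁ * ω ^ 2 + k₀ * μ₁ * ν₀ ^ 2) / (2 * ω ^ 3))
      + 3 * k₀ * ν₀ ^ 4 * r ^ 3 / (8 * ω ^ 5))
    (hg₂ : ∀ r z, g₂ r z =
      -(h₀ ^ 2 * ν₀ * z ^ 3 * (k₀ * ν₀ + ω ^ 2) / ω ^ 5)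
      - 3 * ν₀ ^ 3 * r ^ 2 * z * (k₀ * ν₀ + ω ^ 2) / (2 * ω ^ 5)
      + μ₁ * ν₀ * z * (k₀ * ν₀ + ω ^ 2) / ω ^ 3)
    (hδa : 0 < k₀ * (2 * k₀ * μ₁ * ν₀ ^ 2 - α₁ * ω ^ 2))
    (hδb : 0 < k₀ * (2 * α₁ * ω ^ 2 + k₀ * μ₁ * ν₀ ^ 2)) :
    let δa := k₀ * (2 * k₀ * μ₁ * ν₀ ^ 2 - α₁ * ω ^ 2)
    let δb := k₀ * (2 * α₁ * ω ^ 2 + k₀ * μ₁ * ν₀ ^ 2)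
    let δd := α₁ * (k₀ * ν₀ + ω ^ 2)
    let r₁ := (2 * ω / ν₀ ^ 2) * Real.sqrt (δa / (15 * k₀ ^ 2))
    let z₁ := (ω / (h₀ * ν₀)) * Real.sqrt (δb / (5 * k₀ ^ 2))
    (∀ z₀ ∈ ({z₁, -z₁} : Set ℝ),
      deriv (fun r => g₁ r z₀) r₁ * deriv (fun z => g₂ r₁ z) z₀
        - deriv (fun z => g₁ r₁ z) z₀ * deriv (fun r => g₂ r z₀) r₁
      = 2 * δa * δb * δd / (5 * k₀ ^ 3 * ν₀ * α₁ * ω ^ 6)) := by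
  intro δa δb δd r₁ z₁ z₀ hz₀
  have hω0 : ω ≠ 0 := ne_of_gt hω
  have hk2 : (0:ℝ) < k₀ ^ 2 := by positivity
  have hsa : Real.sqrt (δa / (15 * k₀ ^ 2)) ^ 2 = δa / (15 * k₀ ^ 2) :=
    Real.sq_sqrt (by positivity)
  have hsb : Real.sqrt (δb / (5 * k₀ ^ 2)) ^ 2 = δb / (5 * k₀ ^ 2) :=
    Real.sq_sqrt (by positivity)
  have hr2 : r₁ ^ 2 = (2 * ω / ν₀ ^ 2) ^ 2 * (δa / (15 * k₀ ^ 2)) := by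
    rw [show r₁ ^ 2 = (2 * ω / ν₀ ^ 2) ^ 2 * Real.sqrt (δa / (15 * k₀ ^ 2)) ^ 2 by
      simp [r₁, mul_pow], hsa]
  have hz2 : z₀ ^ 2 = (ω / (h₀ * ν₀)) ^ 2 * (δb / (5 * k₀ ^ 2)) := by
    have hz1 : z₁ ^ 2 = (ω / (h₀ * ν₀)) ^ 2 * (δb / (5 * k₀ ^ 2)) := by
      rw [show z₁ ^ 2 = (ω / (h₀ * ν₀)) ^ 2 * Real.sqrt (δb / (5 * k₀ ^ 2)) ^ 2 by
        simp [z₁, mul_pow], hsb]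
    rcases hz₀ with h | h
    · rw [h, hz1]
    · simp only [Set.mem_singleton_iff] at h
      rw [h, neg_pow, hz1]; ring
  -- rewrite the four derivatives
  have e1 : (fun r => g₁ r z₀) = fun r =>
      (3 * k₀ * ν₀ ^ 4 / (8 * ω ^ 5)) * r ^ 3 +
      (3 * h₀ ^ 2 * k₀ * ν₀ ^ 2 * z₀ ^ 2 / (2 * ω ^ 5)
        - (α₁ * ω ^ 2 + k₀ * μ₁ * ν₀ ^ 2) / (2 * ω ^ 3)) * r :=
    funext fun r => by rw [hg₁]; ring
  have e2 : (fun z => g₂ r₁ z) = fun z =>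
      (-(h₀ ^ 2 * ν₀ * (k₀ * ν₀ + ω ^ 2) / ω ^ 5)) * z ^ 3 +
      (- (3 * ν₀ ^ 3 * r₁ ^ 2 * (k₀ * ν₀ + ω ^ 2) / (2 * ω ^ 5))
        + μ₁ * ν₀ * (k₀ * ν₀ + ω ^ 2) / ω ^ 3) * z :=
    funext fun z => by rw [hg₂]; ring
  have e3 : (fun z => g₁ r₁ z) = fun z =>
      (r₁ * (3 * h₀ ^ 2 * k₀ * ν₀ ^ 2) / (2 * ω ^ 5)) * z ^ 2 +
      (- r₁ * ((α₁ * ω ^ 2 + k₀ * μ₁ * ν₀ ^ 2) / (2 * ω ^ 3))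
        + 3 * k₀ * ν₀ ^ 4 * r₁ ^ 3 / (8 * ω ^ 5)) :=
    funext fun z => by rw [hg₁]; ring
  have e4 : (fun r => g₂ r z₀) = fun r =>
      (- (3 * ν₀ ^ 3 * z₀ * (k₀ * ν₀ + ω ^ 2) / (2 * ω ^ 5))) * r ^ 2 +
      (-(h₀ ^ 2 * ν₀ * z₀ ^ 3 * (k₀ * ν₀ + ω ^ 2) / ω ^ 5)
        + μ₁ * ν₀ * z₀ * (k₀ * ν₀ + ω ^ 2) / ω ^ 3) :=
    funext fun r => by rw [hg₂]; ring
  rw [e1, e2, e3, e4, deriv_cubic', deriv_cubic', deriv_quad', deriv_quad']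
  have key : ∀ x y : ℝ, x = r₁ ^ 2 → y = z₀ ^ 2 →
      (3 * (3 * k₀ * ν₀ ^ 4 / (8 * ω ^ 5)) * x +
        (3 * h₀ ^ 2 * k₀ * ν₀ ^ 2 * y / (2 * ω ^ 5)
          - (α₁ * ω ^ 2 + k₀ * μ₁ * ν₀ ^ 2) / (2 * ω ^ 3))) *
      (3 * (-(h₀ ^ 2 * ν₀ * (k₀ * ν₀ + ω ^ 2) / ω ^ 5)) * y +
        (- (3 * ν₀ ^ 3 * x * (k₀ * ν₀ + ω ^ 2) / (2 * ω ^ 5))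
          + μ₁ * ν₀ * (k₀ * ν₀ + ω ^ 2) / ω ^ 3)) -
      (2 * (r₁ * (3 * h₀ ^ 2 * k₀ * ν₀ ^ 2) / (2 * ω ^ 5)) * z₀) *
      (2 * (- (3 * ν₀ ^ 3 * z₀ * (k₀ * ν₀ + ω ^ 2) / (2 * ω ^ 5))) * r₁)
      = 2 * δa * δb * δd / (5 * k₀ ^ 3 * ν₀ * α₁ * ω ^ 6) := by
    intro x y hx hy
    have hzz : z₀ * z₀ = y := by rw [hy]; ring
    have hrr : r₁ * r₁ = x := by rw [hx]; ring
    have hx' : x = (2 * ω / ν₀ ^ 2) ^ 2 * (δa / (15 * k₀ ^ 2)) := by rw [hx, hr2]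
    have hy' : y = (ω / (h₀ * ν₀)) ^ 2 * (δb / (5 * k₀ ^ 2)) := by rw [hy, hz2]
    have expand : ∀ u v : ℝ,
        (3 * (3 * k₀ * ν₀ ^ 4 / (8 * ω ^ 5)) * x +
          (3 * h₀ ^ 2 * k₀ * ν₀ ^ 2 * y / (2 * ω ^ 5)
            - (α₁ * ω ^ 2 + k₀ * μ₁ * ν₀ ^ 2) / (2 * ω ^ 3))) *
        (3 * (-(h₀ ^ 2 * ν₀ * (k₀ * ν₀ + ω ^ 2) / ω ^ 5)) * y +
          (- (3 * ν₀ ^ 3 * x * (k₀ * ν₀ + ω ^ 2) / (2 * ω ^ 5))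
            + μ₁ * ν₀ * (k₀ * ν₀ + ω ^ 2) / ω ^ 3)) -
        (2 * (u * (3 * h₀ ^ 2 * k₀ * ν₀ ^ 2) / (2 * ω ^ 5)) * v) *
        (2 * (- (3 * ν₀ ^ 3 * v * (k₀ * ν₀ + ω ^ 2) / (2 * ω ^ 5))) * u)
        = (3 * (3 * k₀ * ν₀ ^ 4 / (8 * ω ^ 5)) * x +
          (3 * h₀ ^ 2 * k₀ * ν₀ ^ 2 * y / (2 * ω ^ 5)
            - (α₁ * ω ^ 2 + k₀ * μ₁ * ν₀ ^ 2) / (2 * ω ^ 3))) *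
        (3 * (-(h₀ ^ 2 * ν₀ * (k₀ * ν₀ + ω ^ 2) / ω ^ 5)) * y +
          (- (3 * ν₀ ^ 3 * x * (k₀ * ν₀ + ω ^ 2) / (2 * ω ^ 5))
            + μ₁ * ν₀ * (k₀ * ν₀ + ω ^ 2) / ω ^ 3)) +
        9 * h₀ ^ 2 * k₀ * ν₀ ^ 5 * (k₀ * ν₀ + ω ^ 2) * (u * u) * (v * v) / ω ^ 10 := by
      intro u v; ring
    rw [expand r₁ z₀, hzz, hrr, hx', hy']
    simp only [δa, δb, δd]
    field_simp
    ring
  exact key _ _ rfl rfl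
end

section
/- Let G(r,z) = (r·((ω²(μ₀ν₁ - α₁ + μ₁ν₀) - β₀h₁μ₀ν₀)/(2ω³)) - 3ν₀r³/(8ω), β₀h₁μ₀ν₀z/ω³). Assume ω > 0, ν₀ ≠ 0, and δ₁ = ω²(μ₀ν₁ - α₁ + μ₁ν₀) - β₀h₁μ₀ν₀ satisfies δ₁ν₀ > 0, and β₀h₁μ₀ ≠ 0. Then the point (r̄, 0) with r̄ = (2/ω)√(δ₁/(3ν₀)) satisfies G(r̄, 0) = (0,0) and the Jacobian determinant of G at (r̄, 0) equals β₀h₁μ₀ν₀·(ω²(α₁ - μ₀ν₁ - μ₁ν₀) + β₀h₁μ₀ν₀)/ω⁶, which is nonzero. -/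
/-- Under hypothesis H₁, the first-order averaged function G has a simple
zero (r̄, 0) with the stated Jacobian determinant. -/
theorem stmt6 (ω ν₀ β₀ h₁ μ₀ μ₁ ν₁ α₁ : ℝ) (hω : 0 < ω) (hν₀ : ν₀ ≠ 0)
    (G₁ G₂ : ℝ → ℝ → ℝ)
    (hG₁ : ∀ r z, G₁ r z =
      r * ((ω ^ 2 * (μ₀ * ν₁ - α₁ + μ₁ * ν₀) - β₀ * h₁ * μ₀ * ν₀) / (2 * ω ^ 3))
      - 3 * ν₀ * r ^ 3 / (8 * ω))
    (hG₂ : ∀ r z, G₂ r z = β₀ * h₁ * μ₀ * ν₀ * z / ω ^ 3)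
    (hδ₁ : 0 < (ω ^ 2 * (μ₀ * ν₁ - α₁ + μ₁ * ν₀) - β₀ * h₁ * μ₀ * ν₀) * ν₀)
    (hβhμ : β₀ * h₁ * μ₀ ≠ 0) :
    let δ₁ := ω ^ 2 * (μ₀ * ν₁ - α₁ + μ₁ * ν₀) - β₀ * h₁ * μ₀ * ν₀
    let r₀ := (2 / ω) * Real.sqrt (δ₁ / (3 * ν₀))
    let J := deriv (fun r => G₁ r 0) r₀ * deriv (fun z => G₂ r₀ z) 0
      - deriv (fun z => G₁ r₀ z) 0 * deriv (fun r => G₂ r 0) r₀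
    (G₁ r₀ 0 = 0 ∧ G₂ r₀ 0 = 0) ∧
    J = β₀ * h₁ * μ₀ * ν₀ *
      (ω ^ 2 * (α₁ - μ₀ * ν₁ - μ₁ * ν₀) + β₀ * h₁ * μ₀ * ν₀) / ω ^ 6 ∧
    J ≠ 0 := by
  intro δ₁ r₀ J
  have hωne : ω ≠ 0 := ne_of_gt hω
  have hδne : δ₁ ≠ 0 := by
    intro h
    rw [show (ω ^ 2 * (μ₀ * ν₁ - α₁ + μ₁ * ν₀) - β₀ * h₁ * μ₀ * ν₀) = δ₁ from rfl, h] at hδ₁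
    simp at hδ₁
  have hδ₁' : 0 < δ₁ * ν₀ := hδ₁
  have hpos : 0 < δ₁ / (3 * ν₀) := by
    rcases lt_or_gt_of_ne hν₀ with h | h
    · have hδneg : δ₁ < 0 := by nlinarith
      exact div_pos_of_neg_of_neg hδneg (by linarith)
    · have hδpos : 0 < δ₁ := by nlinarith
      exact div_pos hδpos (by linarith)
  set s := Real.sqrt (δ₁ / (3 * ν₀)) with hs
  have hs2 : s ^ 2 = δ₁ / (3 * ν₀) := Real.sq_sqrt hpos.le
  have hr₀ : r₀ = 2 / ω * s := rfl
  -- derivative values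
  have hd1 : deriv (fun r => G₁ r 0) r₀ = δ₁ / (2 * ω ^ 3) - 9 * ν₀ * r₀ ^ 2 / (8 * ω) := by
    have : (fun r => G₁ r 0) = fun r =>
        r * (δ₁ / (2 * ω ^ 3)) - 3 * ν₀ * r ^ 3 / (8 * ω) := by
      funext r; exact hG₁ r 0
    rw [this]
    have h : HasDerivAt (fun r : ℝ =>
        r * (δ₁ / (2 * ω ^ 3)) - 3 * ν₀ * r ^ 3 / (8 * ω))
        (δ₁ / (2 * ω ^ 3) - 9 * ν₀ * r₀ ^ 2 / (8 * ω)) r₀ := by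
      have h1 : HasDerivAt (fun r : ℝ => r * (δ₁ / (2 * ω ^ 3))) (δ₁ / (2 * ω ^ 3)) r₀ := by
        simpa using (hasDerivAt_id r₀).mul_const (δ₁ / (2 * ω ^ 3))
      have h2 : HasDerivAt (fun r : ℝ => 3 * ν₀ * r ^ 3 / (8 * ω))
          (9 * ν₀ * r₀ ^ 2 / (8 * ω)) r₀ := by
        have := ((hasDerivAt_pow 3 r₀).const_mul (3 * ν₀)).div_const (8 * ω)
        rw [show (9 * ν₀ * r₀ ^ 2 / (8 * ω)) = 3 * ν₀ * (((3:ℕ):ℝ) * r₀ ^ (3 - 1)) / (8 * ω) by push_cast; ring]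
        exact this
      exact h1.sub h2
    exact h.deriv
  have hd2 : deriv (fun z => G₂ r₀ z) 0 = β₀ * h₁ * μ₀ * ν₀ / ω ^ 3 := by
    have : (fun z => G₂ r₀ z) = fun z => β₀ * h₁ * μ₀ * ν₀ * z / ω ^ 3 := by
      funext z; exact hG₂ r₀ z
    rw [this]
    have h : HasDerivAt (fun z : ℝ => β₀ * h₁ * μ₀ * ν₀ * z / ω ^ 3)
        (β₀ * h₁ * μ₀ * ν₀ / ω ^ 3) 0 := by
      simpa using ((hasDerivAt_id (0:ℝ)).const_mul (β₀ * h₁ * μ₀ * ν₀)).div_const (ω ^ 3)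
    exact h.deriv
  have hd3 : deriv (fun z => G₁ r₀ z) 0 = 0 := by
    have : (fun z => G₁ r₀ z) = fun _ =>
        r₀ * (δ₁ / (2 * ω ^ 3)) - 3 * ν₀ * r₀ ^ 3 / (8 * ω) := by
      funext z; exact hG₁ r₀ z
    rw [this, deriv_const]
  have hd4 : deriv (fun r => G₂ r 0) r₀ = 0 := by
    have : (fun r => G₂ r 0) = fun _ => (0:ℝ) := by
      funext r; rw [hG₂ r 0]; ring
    rw [this, deriv_const]
  have hr₀sq : r₀ ^ 2 = 4 / ω ^ 2 * (δ₁ / (3 * ν₀)) := by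
    rw [hr₀]; rw [mul_pow, hs2]; ring
  have hJ : J = β₀ * h₁ * μ₀ * ν₀ *
      (ω ^ 2 * (α₁ - μ₀ * ν₁ - μ₁ * ν₀) + β₀ * h₁ * μ₀ * ν₀) / ω ^ 6 := by
    have hJdef : J = deriv (fun r => G₁ r 0) r₀ * deriv (fun z => G₂ r₀ z) 0
      - deriv (fun z => G₁ r₀ z) 0 * deriv (fun r => G₂ r 0) r₀ := rfl
    rw [hJdef, hd1, hd2, hd3, hd4, hr₀sq]
    have hδeq : ω ^ 2 * (α₁ - μ₀ * ν₁ - μ₁ * ν₀) + β₀ * h₁ * μ₀ * ν₀ = -δ₁ := by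
      show _ = -(ω ^ 2 * (μ₀ * ν₁ - α₁ + μ₁ * ν₀) - β₀ * h₁ * μ₀ * ν₀); ring
    rw [hδeq]
    field_simp
    ring
  refine ⟨⟨?_, ?_⟩, hJ, ?_⟩
  · rw [hG₁ r₀ 0, show (ω ^ 2 * (μ₀ * ν₁ - α₁ + μ₁ * ν₀) - β₀ * h₁ * μ₀ * ν₀) = δ₁ from rfl]
    have : r₀ ^ 3 = r₀ * r₀ ^ 2 := by ring
    rw [this, hr₀sq, hr₀]
    field_simp
    ring
  · rw [hG₂ r₀ 0]; ring
  · rw [hJ]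
    have hnum : β₀ * h₁ * μ₀ * ν₀ *
        (ω ^ 2 * (α₁ - μ₀ * ν₁ - μ₁ * ν₀) + β₀ * h₁ * μ₀ * ν₀) =
        β₀ * h₁ * μ₀ * ν₀ * (-δ₁) := by
      show _ = β₀ * h₁ * μ₀ * ν₀ * -(ω ^ 2 * (μ₀ * ν₁ - α₁ + μ₁ * ν₀) - β₀ * h₁ * μ₀ * ν₀)
      ring
    rw [hnum]
    exact div_ne_zero (by
      apply mul_ne_zero (mul_ne_zero hβhμ hν₀)
      simpa using hδne) (pow_ne_zero 6 hωne)
end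

section
/- Assume ν₀ > 0, ω > 0, and μ₁ν₀ - α₁ > 0. Then the function g₁¹(r) = -3ν₀r³/(8ω) - r(α₁ - μ₁ν₀)/(2ω) has a unique positive zero r* = 2√((μ₁ν₀ - α₁)/(3ν₀)), and the derivative of g₁¹ at r* equals -(1/(8ω))(4α₁ - 4μ₁ν₀ + 9ν₀(r*)²) = -(μ₁ν₀ - α₁)/ω ≠ 0. -/
/-- Under hypothesis H₄, g₁¹(r) = -3ν₀r³/(8ω) - r(α₁ - μ₁ν₀)/(2ω) has a unique
positive zero r* = 2√((μ₁ν₀-α₁)/(3ν₀)), and (g₁¹)'(r*) = -(μ₁ν₀-α₁)/ω ≠ 0. -/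
theorem stmt11 (ω ν₀ α₁ μ₁ : ℝ) (hν₀ : 0 < ν₀) (hω : 0 < ω)
    (h : 0 < μ₁ * ν₀ - α₁)
    (g : ℝ → ℝ)
    (hg : ∀ r, g r = -(3 * ν₀ * r ^ 3) / (8 * ω) - r * (α₁ - μ₁ * ν₀) / (2 * ω)) :
    let rs := 2 * Real.sqrt ((μ₁ * ν₀ - α₁) / (3 * ν₀))
    0 < rs ∧ g rs = 0 ∧ (∀ r : ℝ, 0 < r → g r = 0 → r = rs) ∧
    deriv g rs = -(1 / (8 * ω)) * (4 * α₁ - 4 * μ₁ * ν₀ + 9 * ν₀ * rs ^ 2) ∧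
    deriv g rs = -(μ₁ * ν₀ - α₁) / ω ∧
    deriv g rs ≠ 0 := by
  intro rs
  have hK : (0:ℝ) < (μ₁ * ν₀ - α₁) / (3 * ν₀) := by positivity
  have hs : 0 < Real.sqrt ((μ₁ * ν₀ - α₁) / (3 * ν₀)) := Real.sqrt_pos.mpr hK
  have hs2 : Real.sqrt ((μ₁ * ν₀ - α₁) / (3 * ν₀)) ^ 2 = (μ₁ * ν₀ - α₁) / (3 * ν₀) :=
    Real.sq_sqrt hK.le
  have hrs : 0 < rs := by simp only [rs]; positivity
  have hrs2 : rs ^ 2 = 4 * ((μ₁ * ν₀ - α₁) / (3 * ν₀)) := by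
    simp only [rs]; rw [mul_pow, hs2]; ring
  have hωne : (ω:ℝ) ≠ 0 := hω.ne'
  have hνne : (ν₀:ℝ) ≠ 0 := hν₀.ne'
  have hgrs : g rs = 0 := by
    rw [hg, pow_succ, hrs2]
    field_simp
    ring
  -- derivative
  have hfun : g = fun r => -(3 * ν₀) / (8 * ω) * r ^ 3 + (-(α₁ - μ₁ * ν₀) / (2 * ω)) * r := by
    funext r; rw [hg]; ring
  have hderiv : deriv g rs
      = -(3 * ν₀) / (8 * ω) * (3 * rs ^ 2) + (-(α₁ - μ₁ * ν₀) / (2 * ω)) := by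
    rw [hfun]
    have h1 : HasDerivAt (fun r : ℝ => -(3 * ν₀) / (8 * ω) * r ^ 3 + (-(α₁ - μ₁ * ν₀) / (2 * ω)) * r)
        (-(3 * ν₀) / (8 * ω) * (3 * rs ^ 2) + (-(α₁ - μ₁ * ν₀) / (2 * ω))) rs := by
      have h2 := ((hasDerivAt_pow 3 rs).const_mul (-(3 * ν₀) / (8 * ω))).add
        ((hasDerivAt_id rs).const_mul (-(α₁ - μ₁ * ν₀) / (2 * ω)))
      simp at h2 ⊢; exact h2
    exact h1.deriv
  refine ⟨hrs, hgrs, ?_, ?_, ?_, ?_⟩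
  · intro r hr hgr
    rw [hg] at hgr
    have hr2 : r ^ 2 = rs ^ 2 := by
      rw [hrs2]
      have : r * (-(3 * ν₀ * r ^ 2) / (8 * ω) - (α₁ - μ₁ * ν₀) / (2 * ω)) = 0 := by
        rw [← hgr]; field_simp
      have h3 : -(3 * ν₀ * r ^ 2) / (8 * ω) - (α₁ - μ₁ * ν₀) / (2 * ω) = 0 :=
        (mul_eq_zero.mp this).resolve_left hr.ne'
      field_simp at h3
      have h4 : 6 * ν₀ * r ^ 2 + 8 * (α₁ - μ₁ * ν₀) = 0 :=
        mul_left_cancel₀ hωne (show ω * (6 * ν₀ * r ^ 2 + 8 * (α₁ - μ₁ * ν₀)) = ω * 0 by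
          linear_combination (-ω) * h3)
      field_simp
      linarith
    have h4 : (r - rs) * (r + rs) = 0 := by nlinarith
    rcases mul_eq_zero.mp h4 with h5 | h5
    · linarith
    · linarith
  · rw [hderiv]; ring
  · rw [hderiv, hrs2]; field_simp; ring
  · rw [hderiv, hrs2]
    have : -(3 * ν₀) / (8 * ω) * (3 * (4 * ((μ₁ * ν₀ - α₁) / (3 * ν₀)))) + -(α₁ - μ₁ * ν₀) / (2 * ω)
        = -(μ₁ * ν₀ - α₁) / ω := by field_simp; ring
    rw [this]
    intro hc
    have : μ₁ * ν₀ - α₁ = 0 := by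
      field_simp at hc; linarith
    linarith
end

section
/- Let G(r,z) = (r·((δ₂)/(2ω³) - 3h₀²ν₀⁵z²/(2ω⁷)) - 3ν₀r³/(8ω), β₁h₀μ₀ν₀z/ω³) where δ₂ = ω²(μ₀ν₁ - α₁ + μ₁ν₀) - β₁h₀μ₀ν₀. Assume ω > 0, δ₂ν₀ > 0, and β₁h₀μ₀ν₀ ≠ 0. Then (r̄, 0) with r̄ = (2/ω)√(δ₂/(3ν₀)) is a zero of G and the Jacobian determinant of G at (r̄, 0) equals β₁h₀μ₀ν₀(ω²(α₁ - μ₀ν₁ - μ₁ν₀) + β₁h₀μ₀ν₀)/ω⁶ = -β₁h₀μ₀ν₀·δ₂/ω⁶ ≠ 0. -/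
/-- Under hypothesis H₂, the first-order averaged function G has a simple zero
(r̄, 0) with Jacobian determinant -β₁h₀μ₀ν₀δ₂/ω⁶ ≠ 0. -/
theorem stmt19 (ω ν₀ h₀ β₁ μ₀ μ₁ ν₁ α₁ : ℝ) (hω : 0 < ω)
    (G₁ G₂ : ℝ → ℝ → ℝ)
    (hG₁ : ∀ r z, G₁ r z =
      r * ((ω ^ 2 * (μ₀ * ν₁ - α₁ + μ₁ * ν₀) - β₁ * h₀ * μ₀ * ν₀) / (2 * ω ^ 3)
        - 3 * h₀ ^ 2 * ν₀ ^ 5 * z ^ 2 / (2 * ω ^ 7))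
      - 3 * ν₀ * r ^ 3 / (8 * ω))
    (hG₂ : ∀ r z, G₂ r z = β₁ * h₀ * μ₀ * ν₀ * z / ω ^ 3)
    (hδ₂ : 0 < (ω ^ 2 * (μ₀ * ν₁ - α₁ + μ₁ * ν₀) - β₁ * h₀ * μ₀ * ν₀) * ν₀)
    (hβhμ : β₁ * h₀ * μ₀ * ν₀ ≠ 0) :
    let δ₂ := ω ^ 2 * (μ₀ * ν₁ - α₁ + μ₁ * ν₀) - β₁ * h₀ * μ₀ * ν₀
    let r₀ := (2 / ω) * Real.sqrt (δ₂ / (3 * ν₀))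
    let J := deriv (fun r => G₁ r 0) r₀ * deriv (fun z => G₂ r₀ z) 0
      - deriv (fun z => G₁ r₀ z) 0 * deriv (fun r => G₂ r 0) r₀
    (G₁ r₀ 0 = 0 ∧ G₂ r₀ 0 = 0) ∧
    J = β₁ * h₀ * μ₀ * ν₀ *
      (ω ^ 2 * (α₁ - μ₀ * ν₁ - μ₁ * ν₀) + β₁ * h₀ * μ₀ * ν₀) / ω ^ 6 ∧
    J = -(β₁ * h₀ * μ₀ * ν₀ * δ₂) / ω ^ 6 ∧
    J ≠ 0 := by
  intro δ₂ r₀ J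
  have hν : ν₀ ≠ 0 := by
    intro h; apply hβhμ; rw [h]; ring
  have hω0 : ω ≠ 0 := ne_of_gt hω
  have hδ : δ₂ * ν₀ > 0 := hδ₂
  have hδne : δ₂ ≠ 0 := by
    intro h; rw [h] at hδ; simp at hδ
  have hq : 0 < δ₂ / (3 * ν₀) := by
    have h3 : (0:ℝ) < 3 * ν₀ ^ 2 := by positivity
    have : δ₂ / (3 * ν₀) = (δ₂ * ν₀) / (3 * ν₀ ^ 2) := by
      field_simp
    rw [this]
    exact div_pos hδ h3
  have hs : Real.sqrt (δ₂ / (3 * ν₀)) ^ 2 = δ₂ / (3 * ν₀) :=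
    Real.sq_sqrt hq.le
  have hr2 : r₀ ^ 2 = 4 * δ₂ / (3 * ν₀ * ω ^ 2) := by
    show ((2 / ω) * Real.sqrt (δ₂ / (3 * ν₀))) ^ 2 = _
    rw [mul_pow, hs]
    field_simp; ring
  -- zero of G
  have hz1 : G₁ r₀ 0 = 0 := by
    rw [hG₁]
    have : r₀ ^ 3 = r₀ * r₀ ^ 2 := by ring
    rw [this, hr2]
    field_simp
    ring
  have hz2 : G₂ r₀ 0 = 0 := by rw [hG₂]; simp
  -- derivatives
  have hd11 : deriv (fun r => G₁ r 0) r₀ = -δ₂ / ω ^ 3 := by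
    have hfun : (fun r => G₁ r 0) =
        fun r => r * (δ₂ / (2 * ω ^ 3)) - (3 * ν₀ / (8 * ω)) * r ^ 3 := by
      funext r; rw [hG₁]; ring
    rw [hfun]
    have h : HasDerivAt (fun r => r * (δ₂ / (2 * ω ^ 3)) - (3 * ν₀ / (8 * ω)) * r ^ 3)
        (1 * (δ₂ / (2 * ω ^ 3)) - (3 * ν₀ / (8 * ω)) * (↑3 * r₀ ^ (3 - 1))) r₀ :=
      ((hasDerivAt_id r₀).mul_const _).sub ((hasDerivAt_pow 3 r₀).const_mul _)
    rw [h.deriv]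
    simp only [pow_succ, pow_zero, one_mul, Nat.cast_ofNat]
    have h2 : r₀ * r₀ = 4 * δ₂ / (3 * ν₀ * ω ^ 2) := by rw [← sq]; exact hr2
    rw [h2]
    field_simp
    ring
  have hd22 : deriv (fun z => G₂ r₀ z) 0 = β₁ * h₀ * μ₀ * ν₀ / ω ^ 3 := by
    have hfun : (fun z => G₂ r₀ z) = fun z => (β₁ * h₀ * μ₀ * ν₀ / ω ^ 3) * z := by
      funext z; rw [hG₂]; ring
    rw [hfun]
    have h : HasDerivAt (fun z : ℝ => (β₁ * h₀ * μ₀ * ν₀ / ω ^ 3) * z)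
        (β₁ * h₀ * μ₀ * ν₀ / ω ^ 3) 0 := by
      simpa using (hasDerivAt_id (0:ℝ)).const_mul (β₁ * h₀ * μ₀ * ν₀ / ω ^ 3)
    exact h.deriv
  have hd12 : deriv (fun z => G₁ r₀ z) 0 = 0 := by
    have hfun : (fun z => G₁ r₀ z) =
        fun z => (r₀ * (δ₂ / (2 * ω ^ 3)) - 3 * ν₀ * r₀ ^ 3 / (8 * ω))
          - (r₀ * 3 * h₀ ^ 2 * ν₀ ^ 5 / (2 * ω ^ 7)) * z ^ 2 := by
      funext z; rw [hG₁]; ring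
    rw [hfun]
    have h : HasDerivAt (fun z => (r₀ * (δ₂ / (2 * ω ^ 3)) - 3 * ν₀ * r₀ ^ 3 / (8 * ω))
          - (r₀ * 3 * h₀ ^ 2 * ν₀ ^ 5 / (2 * ω ^ 7)) * z ^ 2)
        (0 - (r₀ * 3 * h₀ ^ 2 * ν₀ ^ 5 / (2 * ω ^ 7)) * (↑2 * (0:ℝ) ^ (2 - 1))) 0 :=
      (hasDerivAt_const _ _).sub ((hasDerivAt_pow 2 (0:ℝ)).const_mul _)
    rw [h.deriv]
    simp
  have hd21 : deriv (fun r => G₂ r 0) r₀ = 0 := by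
    have hfun : (fun r => G₂ r 0) = fun _ => (0:ℝ) := by
      funext r; rw [hG₂]; simp
    rw [hfun]; simp
  have hJ : J = -(β₁ * h₀ * μ₀ * ν₀ * δ₂) / ω ^ 6 := by
    show deriv (fun r => G₁ r 0) r₀ * deriv (fun z => G₂ r₀ z) 0
      - deriv (fun z => G₁ r₀ z) 0 * deriv (fun r => G₂ r 0) r₀ = _
    rw [hd11, hd22, hd12, hd21]
    field_simp
    ring
  refine ⟨⟨hz1, hz2⟩, ?_, hJ, ?_⟩
  · rw [hJ]
    show -(β₁ * h₀ * μ₀ * ν₀ * δ₂) / ω ^ 6 = _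
    field_simp
    ring
  · rw [hJ]
    intro h
    have hω6 : (ω:ℝ) ^ 6 ≠ 0 := by positivity
    rw [div_eq_zero_iff, neg_eq_zero] at h
    rcases h with h | h
    · exact (mul_ne_zero hβhμ hδne) h
    · exact hω6 h
end
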